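/- Let n ≥ 2 and c ∈ ℝ. Consider the two curve-germs in ℝ^{2n} (coordinates (p₁,q₁,p₂,q₂,…,pₙ,qₙ), all unlisted coordinates equal to 0): B₁(t) = (t³, (c/3)t⁶, 0, −t², 0, …, 0) and B₂(t) = (t³, 0, −t², 0, 0, …, 0) (the class (T₇)⁴). Then Lt(B₁,B₂) = 2, while Lt(B₁) = ∞ and Lt(B₂) = ∞ (each branch is contained in a smooth Lagrangian submanifold, but the two branches are not contained in a common one). -/

import Mathlib

noncomputable section

/-- The order of vanishing at `0` of a function `h : ℝ → ℝ`: the least `k ≥ 1` such that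
the `k`-th derivative of `h` at `0` is nonzero, and `∞` if all derivatives vanish at `0`. -/
def vanishOrder (h : ℝ → ℝ) : ℕ∞ :=
  sInf {k : ℕ∞ | ∃ m : ℕ, k = m ∧ 1 ≤ m ∧ iteratedDeriv m h 0 ≠ 0}

/-- The standard symplectic form `ω = ∑ dpᵢ ∧ dqᵢ` on `ℝ^{2n}`, where the coordinates are
ordered as `(p₁, q₁, …, pₙ, qₙ)` (so `pᵢ` has index `2(i-1)` and `qᵢ` has index `2(i-1)+1`). -/
def stdSymp (n : ℕ) (u v : Fin (2 * n) → ℝ) : ℝ :=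
  ∑ i : Fin n,
    (u ⟨2 * i.val, by have := i.isLt; omega⟩ * v ⟨2 * i.val + 1, by have := i.isLt; omega⟩ -
     u ⟨2 * i.val + 1, by have := i.isLt; omega⟩ * v ⟨2 * i.val, by have := i.isLt; omega⟩)

/-- A germ at `0` of a smooth Lagrangian submanifold of `(ℝ^{2n}, ω)`, given by `n` smooth
functions `H₁, …, Hₙ` vanishing at `0`, whose differentials are linearly independent at the
points of `{H₁ = ⋯ = Hₙ = 0}` near `0`, and such that `ω` vanishes on `ker DH(x)` at every
such point. -/
structure LagrangianGerm (n : ℕ) : Type where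
  H : Fin n → (Fin (2 * n) → ℝ) → ℝ
  smooth : ∀ i, ContDiff ℝ (⊤ : ℕ∞) (H i)
  zero_at_zero : ∀ i, H i 0 = 0
  lagrangian : ∃ U : Set (Fin (2 * n) → ℝ), IsOpen U ∧ 0 ∈ U ∧
    ∀ x ∈ U, (∀ i, H i x = 0) →
      LinearIndependent ℝ (fun i => fderiv ℝ (H i) x) ∧
      ∀ u v : Fin (2 * n) → ℝ, (∀ i, fderiv ℝ (H i) x u = 0) →
        (∀ i, fderiv ℝ (H i) x v = 0) → stdSymp n u v = 0

/-- The tangency order `t(f, L)` of a curve `f` to a Lagrangian submanifold-germ `L`: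
the minimum over `i` of the order of vanishing at `0` of `Hᵢ ∘ f`. -/
def tOrd {n : ℕ} (f : ℝ → Fin (2 * n) → ℝ) (L : LagrangianGerm n) : ℕ∞ :=
  ⨅ i : Fin n, vanishOrder (fun t => L.H i (f t))

/-- The Lagrangian tangency order `Lt(f)` of a curve `f`. -/
def Lt1 {n : ℕ} (f : ℝ → Fin (2 * n) → ℝ) : ℕ∞ :=
  ⨆ L : LagrangianGerm n, tOrd f L

/-- The Lagrangian tangency order `Lt(f, g)` of a multi-germ of two curves. -/
def Lt2 {n : ℕ} (f g : ℝ → Fin (2 * n) → ℝ) : ℕ∞ :=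
  ⨆ L : LagrangianGerm n, min (tOrd f L) (tOrd g L)

/-- The Lagrangian tangency order `Lt(f, g, h)` of a multi-germ of three curves. -/
def Lt3 {n : ℕ} (f g h : ℝ → Fin (2 * n) → ℝ) : ℕ∞ :=
  ⨆ L : LagrangianGerm n, min (tOrd f L) (min (tOrd g L) (tOrd h L))

/-! Both branches have zero velocity and acceleration `-2 ∂_{q₂}` (for `B₁`) resp. `-2 ∂_{p₂}`
(for `B₂`) at `0`. If a Lagrangian germ `{H = 0}` had tangency order `> 2` with both, then
`(Hᵢ ∘ Bₖ)''(0) = DHᵢ(0) Bₖ''(0)` would vanish for all `i`, putting both accelerations in the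
isotropic space `ker DH(0)`; but `ω(∂_{q₂}, ∂_{p₂}) ≠ 0`. Conversely every Lagrangian germ has
order `≥ 2` with a curve of zero velocity, and each branch lies in a product of graphs of
functions `qᵢ = gᵢ(pᵢ)` or `pᵢ = gᵢ(qᵢ)`, which is Lagrangian plane by plane. -/

theorem vanishOrder_const (a : ℝ) : vanishOrder (fun _ => a) = ⊤ := by
  refine sInf_eq_top.mpr ?_
  rintro _ ⟨m, rfl, hm, hne⟩
  simp [iteratedDeriv_const, Nat.one_le_iff_ne_zero.mp hm] at hne

theorem two_le_vanishOrder_of_deriv_eq_zero {h : ℝ → ℝ} (h1 : deriv h 0 = 0) :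
    2 ≤ vanishOrder h := by
  refine le_sInf ?_
  rintro _ ⟨m, rfl, hm, hne⟩
  obtain rfl | hm2 : m = 1 ∨ 2 ≤ m := by omega
  · exact absurd (by rwa [iteratedDeriv_one]) hne
  · exact_mod_cast hm2

theorem iteratedDeriv_eq_zero_of_lt_vanishOrder {h : ℝ → ℝ} {m : ℕ} (hm : 1 ≤ m)
    (hlt : (m : ℕ∞) < vanishOrder h) : iteratedDeriv m h 0 = 0 := by
  by_contra hne
  exact (sInf_le ⟨m, rfl, hm, hne⟩ : vanishOrder h ≤ m).not_gt hlt

theorem ContinuousLinearMap.iteratedDeriv_comp_left {𝕜 F G : Type*} [NontriviallyNormedField 𝕜]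
    [NormedAddCommGroup F] [NormedSpace 𝕜 F] [NormedAddCommGroup G] [NormedSpace 𝕜 G]
    {f : 𝕜 → F} {x : 𝕜} {m : ℕ} (g : F →L[𝕜] G) (hf : ContDiffAt 𝕜 m f x) :
    iteratedDeriv m (g ∘ f) x = g (iteratedDeriv m f x) := by
  simp [iteratedDeriv_eq_iteratedFDeriv, g.iteratedFDeriv_comp_left hf le_rfl]

theorem iteratedDeriv_pi_apply {𝕜 ι F : Type*} [NontriviallyNormedField 𝕜] [Fintype ι]
    [NormedAddCommGroup F] [NormedSpace 𝕜 F] {γ : 𝕜 → ι → F} {x : 𝕜} {m : ℕ}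
    (hγ : ContDiffAt 𝕜 m γ x) (j : ι) :
    iteratedDeriv m γ x j = iteratedDeriv m (fun t => γ t j) x :=
  ((ContinuousLinearMap.proj j).iteratedDeriv_comp_left hγ).symm

theorem iteratedDeriv_two_comp_of_deriv_eq_zero {𝕜 E F : Type*} [NontriviallyNormedField 𝕜]
    [NormedAddCommGroup E] [NormedSpace 𝕜 E] [NormedAddCommGroup F] [NormedSpace 𝕜 F]
    {h : E → F} {γ : 𝕜 → E} (hh : ContDiff 𝕜 2 h) (hγ : ContDiff 𝕜 2 γ) (hγ' : deriv γ 0 = 0) :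
    iteratedDeriv 2 (h ∘ γ) 0 = fderiv 𝕜 h (γ 0) (iteratedDeriv 2 γ 0) := by
  have hderiv : deriv (h ∘ γ) = fun t => fderiv 𝕜 h (γ t) (deriv γ t) := by
    funext t
    exact fderiv_comp_deriv t ((hh.differentiable two_ne_zero) _)
      (hγ.differentiable two_ne_zero t)
  have hDh : HasDerivAt (fun t => fderiv 𝕜 h (γ t)) (deriv (fun t => fderiv 𝕜 h (γ t)) 0) 0 :=
    (((hh.fderiv_right (m := 1) le_rfl).comp (hγ.of_le (by norm_num))).differentiable
      one_ne_zero 0).hasDerivAt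
  have hγ'' : HasDerivAt (deriv γ) (iteratedDeriv 2 γ 0) 0 := by
    rw [iteratedDeriv_succ, iteratedDeriv_one]
    exact ((hγ.iterate_deriv' 1 1).differentiable one_ne_zero 0).hasDerivAt
  rw [iteratedDeriv_succ, iteratedDeriv_one, hderiv, (hDh.clm_apply hγ'').deriv, hγ', map_zero,
    zero_add]

namespace LagrangianGerm

variable {n : ℕ} (L : LagrangianGerm n)

theorem stdSymp_eq_zero_of_fderiv_eq_zero {u v : Fin (2 * n) → ℝ}
    (hu : ∀ i, fderiv ℝ (L.H i) 0 u = 0) (hv : ∀ i, fderiv ℝ (L.H i) 0 v = 0) :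
    stdSymp n u v = 0 := by
  obtain ⟨U, -, hU0, hL⟩ := L.lagrangian
  exact (hL 0 hU0 L.zero_at_zero).2 u v hu hv

theorem tOrd_eq_top_of_forall_H_comp_eq_zero {f : ℝ → Fin (2 * n) → ℝ}
    (hf : ∀ i t, L.H i (f t) = 0) : tOrd f L = ⊤ :=
  top_unique <| le_iInf fun i => by simp only [hf, vanishOrder_const, le_refl]

theorem two_le_tOrd_of_deriv_eq_zero {f : ℝ → Fin (2 * n) → ℝ}
    (hf : DifferentiableAt ℝ f 0) (hf' : deriv f 0 = 0) : 2 ≤ tOrd f L :=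
  le_iInf fun i => two_le_vanishOrder_of_deriv_eq_zero <| by
    change deriv (L.H i ∘ f) 0 = 0
    rw [fderiv_comp_deriv _ (((L.smooth i).differentiable (by simp)) _) hf, hf', map_zero]

theorem fderiv_iteratedDeriv_two_eq_zero_of_two_lt_tOrd {f : ℝ → Fin (2 * n) → ℝ}
    (hf : ContDiff ℝ 2 f) (hf' : deriv f 0 = 0) (ht : 2 < tOrd f L) (i : Fin n) :
    fderiv ℝ (L.H i) (f 0) (iteratedDeriv 2 f 0) = 0 := by
  have hH : ContDiff ℝ 2 (L.H i) := (L.smooth i).of_le (WithTop.coe_le_coe.mpr le_top)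
  rw [← iteratedDeriv_two_comp_of_deriv_eq_zero hH hf hf']
  exact iteratedDeriv_eq_zero_of_lt_vanishOrder one_le_two (ht.trans_le (iInf_le _ i))

theorem min_tOrd_le_two {f g : ℝ → Fin (2 * n) → ℝ} (hf : ContDiff ℝ 2 f) (hg : ContDiff ℝ 2 g)
    (hf0 : f 0 = 0) (hg0 : g 0 = 0) (hf' : deriv f 0 = 0) (hg' : deriv g 0 = 0)
    (hω : stdSymp n (iteratedDeriv 2 f 0) (iteratedDeriv 2 g 0) ≠ 0) :
    min (tOrd f L) (tOrd g L) ≤ 2 := by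
  by_contra! hlt
  rw [lt_min_iff] at hlt
  refine hω (L.stdSymp_eq_zero_of_fderiv_eq_zero (fun i => ?_) fun i => ?_)
  · simpa only [hf0] using L.fderiv_iteratedDeriv_two_eq_zero_of_two_lt_tOrd hf hf' hlt.1 i
  · simpa only [hg0] using L.fderiv_iteratedDeriv_two_eq_zero_of_two_lt_tOrd hg hg' hlt.2 i

end LagrangianGerm

theorem Lt1_eq_top_of_forall_H_comp_eq_zero {n : ℕ} {f : ℝ → Fin (2 * n) → ℝ}
    (L : LagrangianGerm n) (hf : ∀ i t, L.H i (f t) = 0) : Lt1 f = ⊤ :=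
  top_unique <| le_iSup_of_le L (L.tOrd_eq_top_of_forall_H_comp_eq_zero hf).ge

theorem Lt2_eq_two {n : ℕ} [Nonempty (LagrangianGerm n)] {f g : ℝ → Fin (2 * n) → ℝ}
    (hf : ContDiff ℝ 2 f) (hg : ContDiff ℝ 2 g)
    (hf0 : f 0 = 0) (hg0 : g 0 = 0) (hf' : deriv f 0 = 0) (hg' : deriv g 0 = 0)
    (hω : stdSymp n (iteratedDeriv 2 f 0) (iteratedDeriv 2 g 0) ≠ 0) :
    Lt2 f g = 2 := by
  refine le_antisymm (iSup_le fun L => L.min_tOrd_le_two hf hg hf0 hg0 hf' hg' hω) ?_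
  obtain ⟨L⟩ := ‹Nonempty (LagrangianGerm n)›
  have hfd := hf.differentiable two_ne_zero 0
  have hgd := hg.differentiable two_ne_zero 0
  exact le_iSup_of_le L
    (le_min (L.two_le_tOrd_of_deriv_eq_zero hfd hf') (L.two_le_tOrd_of_deriv_eq_zero hgd hg'))

section GraphProduct

variable {n : ℕ}

def pIdx (i : Fin n) : Fin (2 * n) := ⟨2 * i, by omega⟩

def qIdx (i : Fin n) : Fin (2 * n) := ⟨2 * i + 1, by omega⟩

theorem stdSymp_eq_sum (u v : Fin (2 * n) → ℝ) :
    stdSymp n u v = ∑ i, (u (pIdx i) * v (qIdx i) - u (qIdx i) * v (pIdx i)) :=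
  rfl

def graphBase (overP : Fin n → Bool) (i : Fin n) : Fin (2 * n) :=
  if overP i then pIdx i else qIdx i

def graphFibre (overP : Fin n → Bool) (i : Fin n) : Fin (2 * n) :=
  if overP i then qIdx i else pIdx i

theorem graphFibre_injective (overP : Fin n → Bool) : (graphFibre overP).Injective := by
  intro i j h
  simp only [graphFibre, pIdx, qIdx] at h
  ext
  split_ifs at h <;> simp only [Fin.mk.injEq] at h <;> omega

theorem graphBase_ne_graphFibre (overP : Fin n → Bool) (i j : Fin n) :
    graphBase overP i ≠ graphFibre overP j := by
  intro h
  obtain rfl : i = j := by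
    have h' := congrArg Fin.val h
    simp only [graphBase, graphFibre, pIdx, qIdx] at h'
    ext
    split_ifs at h' <;> simp only at h' <;> omega
  simp only [graphBase, graphFibre] at h
  split_ifs at h <;> simp [pIdx, qIdx, Fin.ext_iff] at h

theorem hasFDerivAt_graph_equation (overP : Fin n → Bool) {g : ℝ → ℝ} (hg : Differentiable ℝ g)
    (i : Fin n) (x : Fin (2 * n) → ℝ) :
    HasFDerivAt (fun y : Fin (2 * n) → ℝ => y (graphFibre overP i) - g (y (graphBase overP i)))
      (ContinuousLinearMap.proj (R := ℝ) (graphFibre overP i) - deriv g (x (graphBase overP i)) •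
        ContinuousLinearMap.proj (R := ℝ) (graphBase overP i)) x :=
  (hasFDerivAt_apply _ x).sub ((hg _).hasDerivAt.comp_hasFDerivAt x (hasFDerivAt_apply _ x))

/-- The product `Γ₁ × ⋯ × Γₙ` of the curves `Γᵢ` in the symplectic planes `(pᵢ, qᵢ)`, where
`Γᵢ` is the graph `qᵢ = gᵢ(pᵢ)` if `overP i` and `pᵢ = gᵢ(qᵢ)` otherwise. -/
def graphProduct (overP : Fin n → Bool) (g : Fin n → ℝ → ℝ)
    (hg : ∀ i, ContDiff ℝ (⊤ : ℕ∞) (g i)) (hg0 : ∀ i, g i 0 = 0) : LagrangianGerm n where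
  H i x := x (graphFibre overP i) - g i (x (graphBase overP i))
  smooth i := (contDiff_apply ℝ ℝ _).sub ((hg i).comp (contDiff_apply ℝ ℝ _))
  zero_at_zero i := by simp [hg0]
  lagrangian := by
    refine ⟨Set.univ, isOpen_univ, Set.mem_univ _, fun x _ _ => ?_⟩
    have hD i := (hasFDerivAt_graph_equation overP ((hg i).differentiable (by simp)) i x).fderiv
    simp only [hD]
    constructor
    · rw [Fintype.linearIndependent_iff]
      intro c hc i
      have hci := congrArg (fun φ : (Fin (2 * n) → ℝ) →L[ℝ] ℝ =>
        φ (Pi.single (graphFibre overP i) 1)) hc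
      simpa [Pi.single_apply, (graphFibre_injective overP).eq_iff, graphBase_ne_graphFibre]
        using hci
    · intro u v hu hv
      rw [stdSymp_eq_sum]
      refine Finset.sum_eq_zero fun i _ => ?_
      have hui := hu i
      have hvi := hv i
      simp only [graphBase, graphFibre, sub_apply, smul_apply, ContinuousLinearMap.proj_apply,
        smul_eq_mul, sub_eq_zero] at hui hvi
      split_ifs at hui hvi <;> rw [hui, hvi] <;> ring

end GraphProduct

theorem stdSymp_single_qIdx_single_pIdx {n : ℕ} (i : Fin n) (a b : ℝ) :
    stdSymp n (Pi.single (qIdx i) a) (Pi.single (pIdx i) b) = -(a * b) := by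
  rw [stdSymp_eq_sum, Finset.sum_eq_single i]
  · simp [pIdx, qIdx, Fin.ext_iff]
  · intro j _ hj
    have hj' := Fin.val_ne_of_ne hj
    simp only [pIdx, qIdx, Pi.single_apply, Fin.ext_iff]
    split_ifs <;> first | omega | ring
  · simp

namespace T74

variable (n : ℕ) (c : ℝ)

def B₁ : ℝ → Fin (2 * n) → ℝ := fun t j =>
  if (j : ℕ) = 0 then t ^ 3 else if (j : ℕ) = 1 then (c / 3) * t ^ 6
  else if (j : ℕ) = 3 then -t ^ 2 else 0

def B₂ : ℝ → Fin (2 * n) → ℝ := fun t j =>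
  if (j : ℕ) = 0 then t ^ 3 else if (j : ℕ) = 2 then -t ^ 2 else 0

theorem contDiff_B₁ : ContDiff ℝ 2 (B₁ n c) :=
  contDiff_pi.mpr fun j => by unfold B₁; split_ifs <;> fun_prop

theorem contDiff_B₂ : ContDiff ℝ 2 (B₂ n) :=
  contDiff_pi.mpr fun j => by unfold B₂; split_ifs <;> fun_prop

theorem B₁_zero : B₁ n c 0 = 0 := by
  funext j; simp [B₁]

theorem B₂_zero : B₂ n 0 = 0 := by
  funext j; simp [B₂]

theorem deriv_B₁_zero : deriv (B₁ n c) 0 = 0 := by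
  funext j
  rw [← iteratedDeriv_one, iteratedDeriv_pi_apply ((contDiff_B₁ n c).of_le one_le_two).contDiffAt]
  unfold B₁; split_ifs <;> simp

theorem deriv_B₂_zero : deriv (B₂ n) 0 = 0 := by
  funext j
  rw [← iteratedDeriv_one, iteratedDeriv_pi_apply ((contDiff_B₂ n).of_le one_le_two).contDiffAt]
  unfold B₂; split_ifs <;> simp

theorem iteratedDeriv_two_B₁_zero (hn : 2 ≤ n) :
    iteratedDeriv 2 (B₁ n c) 0 = Pi.single (qIdx (⟨1, hn⟩ : Fin n)) (-2) := by
  funext j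
  rw [iteratedDeriv_pi_apply (contDiff_B₁ n c).contDiffAt]
  unfold B₁; split_ifs <;> simp [Pi.single_apply, qIdx, Fin.ext_iff, *]

theorem iteratedDeriv_two_B₂_zero (hn : 2 ≤ n) :
    iteratedDeriv 2 (B₂ n) 0 = Pi.single (pIdx (⟨1, hn⟩ : Fin n)) (-2) := by
  funext j
  rw [iteratedDeriv_pi_apply (contDiff_B₂ n).contDiffAt]
  unfold B₂; split_ifs <;> simp [Pi.single_apply, pIdx, Fin.ext_iff, *]

/-- `{q₁ = (c/3) p₁², p₂ = ⋯ = pₙ = 0}` -/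
def L₁ : LagrangianGerm n :=
  graphProduct (fun i => decide ((i : ℕ) = 0))
    (fun i s => if (i : ℕ) = 0 then c / 3 * s ^ 2 else 0)
    (fun i => by split_ifs <;> fun_prop) (fun i => by simp)

/-- `{q₁ = q₂ = 0, p₃ = ⋯ = pₙ = 0}` -/
def L₂ : LagrangianGerm n :=
  graphProduct (fun i => decide ((i : ℕ) < 2)) (fun _ _ => 0) (fun _ => contDiff_const)
    (fun _ => rfl)

theorem L₁_H_B₁ (i : Fin n) (t : ℝ) : (L₁ n c).H i (B₁ n c t) = 0 := by
  rcases eq_or_ne (i : ℕ) 0 with hi | hi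
  · simp [L₁, graphProduct, graphBase, graphFibre, B₁, pIdx, qIdx, hi]
    ring
  · simp [L₁, graphProduct, graphBase, graphFibre, B₁, pIdx, qIdx, hi]
    omega

theorem L₂_H_B₂ (i : Fin n) (t : ℝ) : (L₂ n).H i (B₂ n t) = 0 := by
  simp only [L₂, graphProduct, graphFibre, B₂, pIdx, qIdx]
  split_ifs <;> simp_all

end T74

/-- Lagrangian tangency orders for the class `(T₇)⁴`. -/
theorem T7_4_lagrangian_tangency_orders
    (n : ℕ) (hn : 2 ≤ n) (c : ℝ)
    (B₁ B₂ : ℝ → Fin (2 * n) → ℝ)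
    (hB₁ : B₁ = fun (t : ℝ) (j : Fin (2 * n)) => if (j : ℕ) = 0 then t ^ 3 else if (j : ℕ) = 1 then (c / 3) * t ^ 6 else if (j : ℕ) = 3 then -t ^ 2 else (0 : ℝ))
    (hB₂ : B₂ = fun (t : ℝ) (j : Fin (2 * n)) => if (j : ℕ) = 0 then t ^ 3 else if (j : ℕ) = 2 then -t ^ 2 else (0 : ℝ)) :
    Lt2 B₁ B₂ = 2 ∧ Lt1 B₁ = ⊤ ∧ Lt1 B₂ = ⊤ := by
  subst hB₁ hB₂
  have : Nonempty (LagrangianGerm n) := ⟨T74.L₂ n⟩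
  have hω : stdSymp n (iteratedDeriv 2 (T74.B₁ n c) 0) (iteratedDeriv 2 (T74.B₂ n) 0) ≠ 0 := by
    rw [T74.iteratedDeriv_two_B₁_zero n c hn, T74.iteratedDeriv_two_B₂_zero n hn,
      stdSymp_single_qIdx_single_pIdx]
    norm_num
  exact ⟨Lt2_eq_two (T74.contDiff_B₁ n c) (T74.contDiff_B₂ n) (T74.B₁_zero n c) (T74.B₂_zero n)
      (T74.deriv_B₁_zero n c) (T74.deriv_B₂_zero n) hω,
    Lt1_eq_top_of_forall_H_comp_eq_zero (T74.L₁ n c) (T74.L₁_H_B₁ n c),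
    Lt1_eq_top_of_forall_H_comp_eq_zero (T74.L₂ n) (T74.L₂_H_B₂ n)⟩

end
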